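/- Let AF = ⟨AR, attacks⟩ be a finite argumentation framework, and associate to each argument a a fresh atom d(a). Define α(AF) = ⋀_{a ∈ AR} ( (⋀_{b:(b,a)∈attacks} (d(a) ← ¬d(b))) ∧ (⋀_{b:(b,a)∈attacks} (d(a) ← ⋀_{c:(c,b)∈attacks} d(c))) ). Then for S ⊆ AR: S is a preferred extension of AF if and only if compl(S) = { d(a) | a ∈ AR \ S } is a minimal model of α(AF). -/

import Mathlib

inductive PForm (α : Type) where
  | atom : α → PForm α
  | tru : PForm α
  | fls : PForm α
  | neg : PForm α → PForm α
  | conj : PForm α → PForm α → PForm α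
  | disj : PForm α → PForm α → PForm α
  | impl : PForm α → PForm α → PForm α
deriving DecidableEq

def PForm.eval {α : Type} (M : Set α) : PForm α → Prop
  | .atom a => a ∈ M
  | .tru => True
  | .fls => False
  | .neg φ => ¬ PForm.eval M φ
  | .conj φ ψ => PForm.eval M φ ∧ PForm.eval M ψ
  | .disj φ ψ => PForm.eval M φ ∨ PForm.eval M ψ
  | .impl φ ψ => PForm.eval M φ → PForm.eval M ψ

def PForm.subst {α β : Type} (σ : α → PForm β) : PForm α → PForm β
  | .atom a => σ a
  | .tru => .tru
  | .fls => .fls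
  | .neg φ => .neg (PForm.subst σ φ)
  | .conj φ ψ => .conj (PForm.subst σ φ) (PForm.subst σ ψ)
  | .disj φ ψ => .disj (PForm.subst σ φ) (PForm.subst σ ψ)
  | .impl φ ψ => .impl (PForm.subst σ φ) (PForm.subst σ ψ)

def ModelOf {α : Type} (M : Set α) (T : Set (PForm α)) : Prop := ∀ φ ∈ T, PForm.eval M φ

def MinimalModel {α : Type} (M : Set α) (T : Set (PForm α)) : Prop :=
  ModelOf M T ∧ ∀ M', ModelOf M' T → M' ⊆ M → M' = M

def MaximalModel {α : Type} (M : Set α) (T : Set (PForm α)) : Prop :=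
  ModelOf M T ∧ ∀ M', ModelOf M' T → M ⊆ M' → M' = M

noncomputable def bigConj {ι α : Type} (s : Finset ι) (f : ι → PForm α) : PForm α :=
  (s.toList.map f).foldr PForm.conj PForm.tru

noncomputable def bigDisj {ι α : Type} (s : Finset ι) (f : ι → PForm α) : PForm α :=
  (s.toList.map f).foldr PForm.disj PForm.fls

def attackers {α : Type} [DecidableEq α] (att : Finset (α × α)) (a : α) : Finset α :=
  (att.filter (fun p => p.2 = a)).image Prod.fst

def conflictFree {α : Type} (att : Finset (α × α)) (S : Set α) : Prop :=
  ∀ a ∈ S, ∀ b ∈ S, (a, b) ∉ att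

def acceptable {α : Type} (att : Finset (α × α)) (S : Set α) (a : α) : Prop :=
  ∀ b, (b, a) ∈ att → ∃ c ∈ S, (c, b) ∈ att

def admissible {α : Type} (att : Finset (α × α)) (S : Set α) : Prop :=
  conflictFree att S ∧ ∀ a ∈ S, acceptable att S a

def preferredExt {α : Type} (att : Finset (α × α)) (S : Set α) : Prop :=
  admissible att S ∧ ∀ S', admissible att S' → S ⊆ S' → S' = S

noncomputable def alphaTheory {α : Type} [DecidableEq α] (att : Finset (α × α)) : Set (PForm α) :=
  { φ | ∃ p ∈ att, φ = PForm.impl (PForm.neg (PForm.atom p.1)) (PForm.atom p.2) } ∪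
  { φ | ∃ p ∈ att, φ = PForm.impl (bigConj (attackers att p.1) PForm.atom) (PForm.atom p.2) }

noncomputable def betaTheory {α : Type} [DecidableEq α] (att : Finset (α × α)) : Set (PForm α) :=
  { φ | ∃ p ∈ att, φ = PForm.impl (PForm.atom p.2) (PForm.neg (PForm.atom p.1)) } ∪
  { φ | ∃ p ∈ att, φ = PForm.impl (PForm.atom p.2) (bigDisj (attackers att p.1) PForm.atom) }

/-! A set `M` of atoms satisfies `α(AF)` exactly when its complement is admissible: the clauses
`d(a) ← ¬d(b)` say that `Mᶜ` is conflict-free, and the clauses `d(a) ← ⋀ d(c)` say, read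
contrapositively, that every member of `Mᶜ` is defended by `Mᶜ` against each of its attackers.
Since complementation reverses inclusion, minimal models are the complements of maximal
admissible sets. -/

theorem minimal_compl_iff {β : Type*} [BooleanAlgebra β] {P : β → Prop} {x : β} :
    Minimal P xᶜ ↔ Maximal (fun y ↦ P yᶜ) x := by
  simp only [Minimal, Maximal, compl_surjective.forall (p := fun y ↦ P y → y ≤ xᶜ → xᶜ ≤ y),
    compl_le_compl_iff_le]

theorem mem_attackers {α : Type} [DecidableEq α] {att : Finset (α × α)} {b c : α} :
    c ∈ attackers att b ↔ (c, b) ∈ att := by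
  simp [attackers]

theorem PForm.eval_bigConj {ι α : Type} {M : Set α} {s : Finset ι} {f : ι → PForm α} :
    (bigConj s f).eval M ↔ ∀ i ∈ s, (f i).eval M := by
  suffices ∀ l : List ι, ((l.map f).foldr PForm.conj PForm.tru).eval M ↔ ∀ i ∈ l, (f i).eval M by
    simpa [bigConj] using this s.toList
  intro l
  induction l with
  | nil => simp [PForm.eval]
  | cons i l ih => simp [PForm.eval, ih]

theorem preferredExt_iff_maximal {α : Type} {att : Finset (α × α)} {S : Set α} :
    preferredExt att S ↔ Maximal (admissible att) S := by
  simp only [preferredExt, maximal_iff, eq_comm]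

theorem minimalModel_iff_minimal {α : Type} {M : Set α} {T : Set (PForm α)} :
    MinimalModel M T ↔ Minimal (ModelOf · T) M := by
  simp only [MinimalModel, minimal_iff, eq_comm]

theorem modelOf_union {α : Type} {M : Set α} {T U : Set (PForm α)} :
    ModelOf M (T ∪ U) ↔ ModelOf M T ∧ ModelOf M U := by
  simp only [ModelOf, Set.mem_union, or_imp, forall_and]

theorem modelOf_setOf_exists_eq {α ι : Type} {M : Set α} {s : Finset ι} {f : ι → PForm α} :
    ModelOf M {φ | ∃ i ∈ s, φ = f i} ↔ ∀ i ∈ s, (f i).eval M :=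
  ⟨fun h i hi ↦ h _ ⟨i, hi, rfl⟩, fun h _ ⟨i, hi, e⟩ ↦ e ▸ h i hi⟩

section
variable {α : Type} {att : Finset (α × α)} {M : Set α}

theorem modelOf_negImpl_iff_conflictFree :
    ModelOf M {φ | ∃ p ∈ att, φ = .impl (.neg (.atom p.1)) (.atom p.2)} ↔ conflictFree att Mᶜ := by
  simp only [modelOf_setOf_exists_eq, PForm.eval, conflictFree, Set.mem_compl_iff]
  exact ⟨fun h a ha b hb hab ↦ hb (h _ hab ha),
    fun h p hp hp₁ ↦ by_contra fun hp₂ ↦ h _ hp₁ _ hp₂ hp⟩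

theorem modelOf_defense_iff_acceptable [DecidableEq α] :
    ModelOf M {φ | ∃ p ∈ att, φ = .impl (bigConj (attackers att p.1) .atom) (.atom p.2)} ↔
      ∀ a ∈ Mᶜ, acceptable att Mᶜ a := by
  simp only [modelOf_setOf_exists_eq, PForm.eval, PForm.eval_bigConj, mem_attackers, acceptable,
    Set.mem_compl_iff]
  refine ⟨fun h a ha b hba ↦ ?_, fun h p hp hdefended ↦ ?_⟩
  · by_contra! hundefended
    exact ha (h _ hba fun c hcb ↦ by_contra fun hc ↦ hundefended c hc hcb)
  · by_contra hp₂
    obtain ⟨c, hc, hcb⟩ := h _ hp₂ _ hp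
    exact hc (hdefended c hcb)

theorem modelOf_alphaTheory_iff [DecidableEq α] :
    ModelOf M (alphaTheory att) ↔ admissible att Mᶜ :=
  modelOf_union.trans (and_congr modelOf_negImpl_iff_conflictFree modelOf_defense_iff_acceptable)

end

theorem stmt3_general {α : Type} [DecidableEq α] (att : Finset (α × α)) (S : Set α) :
    preferredExt att S ↔ MinimalModel Sᶜ (alphaTheory att) := by
  rw [preferredExt_iff_maximal, minimalModel_iff_minimal, minimal_compl_iff]
  simp only [modelOf_alphaTheory_iff, compl_compl]

theorem stmt3 {α : Type} [DecidableEq α] [Fintype α] (att : Finset (α × α)) (S : Set α) :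
    preferredExt att S ↔ MinimalModel Sᶜ (alphaTheory att) :=
  stmt3_general att S
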